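/- The path-covering number is stable under 2-switch: for every simple graph G on a finite vertex set V and every graph G' obtained from G by a 2-switch, |π(G') − π(G)| ≤ 1. -/

import Mathlib

/-
Record a path cover by the vertex lists of its paths. Deleting the edges `ab` and `cd` from an
optimal path cover of `G` cuts at most two of its paths, and if only one is cut we are done. If
both are cut, then `a, c` or `b, d` end up on different paths: otherwise `a, c, d, b` would lie on
one path after the first cut (the edge `cd` is still there), although that cut separated `a` from
`b`. Joining these two paths along the new edge `ac` or `bd` leaves a path cover of `G'` with at
most `π(G) + 1` paths. A 2-switch is undone by a 2-switch, so the bound holds in both directions.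
-/

open SimpleGraph

/-- Four pairwise distinct vertices `a,b,c,d` with `ab, cd ∈ E(G)` and `ac, bd ∉ E(G)`:
the condition under which the 2-switch of `G` at `(a,b;c,d)` is performed. -/
def Switchable {V : Type*} (G : SimpleGraph V) (a b c d : V) : Prop :=
  a ≠ b ∧ a ≠ c ∧ a ≠ d ∧ b ≠ c ∧ b ≠ d ∧ c ≠ d ∧
    G.Adj a b ∧ G.Adj c d ∧ ¬ G.Adj a c ∧ ¬ G.Adj b d

/-- The 2-switch of `G` at `(a,b;c,d)`: the graph on `V` with edge set
`(E(G) \ {ab, cd}) ∪ {ac, bd}`. -/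
def twoSwitch {V : Type*} (G : SimpleGraph V) (a b c d : V) : SimpleGraph V :=
  SimpleGraph.fromEdgeSet ((G.edgeSet \ {s(a, b), s(c, d)}) ∪ {s(a, c), s(b, d)})

/-- `G'` is obtained from `G` by a 2-switch. -/
def ObtainedByTwoSwitch {V : Type*} (G G' : SimpleGraph V) : Prop :=
  ∃ a b c d : V, Switchable G a b c d ∧ G' = twoSwitch G a b c d

/-- The path-covering number `π(G)`: the minimum number of pairwise vertex-disjoint
paths of `G` whose vertex sets together contain all vertices of `G`. -/
noncomputable def pathCoverNum {V : Type*} [Fintype V] (G : SimpleGraph V) : ℕ :=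
  sInf {n : ℕ | ∃ P : Fin n → Σ u v : V, G.Walk u v,
    (∀ i, (P i).2.2.IsPath) ∧
    (∀ i j, i ≠ j → ∀ v : V, v ∈ (P i).2.2.support → v ∉ (P j).2.2.support) ∧
    (∀ v : V, ∃ i, v ∈ (P i).2.2.support)}

theorem List.eq_of_mem_of_mem_of_nodup_flatten {α : Type*} {L : List (List α)} {l m : List α}
    {x : α} (hnd : L.flatten.Nodup) (hl : l ∈ L) (hm : m ∈ L) (hxl : x ∈ l) (hxm : x ∈ m) :
    m = l := by
  classical
  by_contra hne
  have := (List.perm_cons_erase hl).flatten.nodup_iff.mp hnd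
  rw [List.flatten_cons, List.nodup_append] at this
  exact this.2.2 x hxl x (List.mem_flatten.mpr ⟨m, (List.mem_erase_of_ne hne).mpr hm, hxm⟩) rfl

namespace SimpleGraph

variable {V : Type*} {G H : SimpleGraph V} {L L' : List (List V)} {l : List V} {s t x y z : V}

/-- A path cover of `G`, each path recorded by its list of vertices. -/
def IsPathCover (G : SimpleGraph V) (L : List (List V)) : Prop :=
  (∀ l ∈ L, l ≠ [] ∧ l.IsChain G.Adj) ∧ L.flatten.Nodup ∧ ∀ v, v ∈ L.flatten

def SamePath (L : List (List V)) (x y : V) : Prop := ∃ l ∈ L, x ∈ l ∧ y ∈ l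

def IsPathEnd (L : List (List V)) (x : V) : Prop :=
  ∃ l ∈ L, l.head? = some x ∨ l.getLast? = some x

def IsCutAt (L L' : List (List V)) (x y : V) : Prop :=
  ∃ p q rest, L.Perm ((p ++ q) :: rest) ∧ L' = p :: q :: rest ∧
    (p.getLast? = some x ∧ q.head? = some y ∨ p.getLast? = some y ∧ q.head? = some x)

theorem SamePath.symm (h : SamePath L x y) : SamePath L y x := by
  obtain ⟨l, hl, hx, hy⟩ := h
  exact ⟨l, hl, hy, hx⟩

theorem SamePath.trans (hnd : L.flatten.Nodup) (hxy : SamePath L x y) (hyz : SamePath L y z) :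
    SamePath L x z := by
  obtain ⟨l, hl, hx, hy⟩ := hxy
  obtain ⟨m, hm, hy', hz⟩ := hyz
  exact ⟨l, hl, hx, List.eq_of_mem_of_mem_of_nodup_flatten hnd hl hm hy hy' ▸ hz⟩

theorem isChain_adj_reverse (hl : l.IsChain G.Adj) : l.reverse.IsChain G.Adj :=
  List.isChain_reverse.mpr (hl.imp fun _ _ h => h.symm)

theorem exists_perm_isChain_getLast? (hl : l.IsChain G.Adj)
    (hx : l.head? = some x ∨ l.getLast? = some x) :
    ∃ l' : List V, l'.Perm l ∧ l'.IsChain G.Adj ∧ l'.getLast? = some x := by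
  rcases hx with hx | hx
  · exact ⟨l.reverse, l.reverse_perm, isChain_adj_reverse hl, by rwa [List.getLast?_reverse]⟩
  · exact ⟨l, List.Perm.refl l, hl, hx⟩

theorem isChain_deleteEdges_of_not_mem {e : Sym2 V} (hx : x ∈ e) (hxl : x ∉ l)
    (hl : l.IsChain G.Adj) : l.IsChain (G.deleteEdges {e}).Adj := by
  refine hl.imp_of_mem_imp fun u w hu hw huw => (deleteEdges_adj ..).mpr ⟨huw, ?_⟩
  rintro rfl
  rcases Sym2.mem_iff.mp hx with rfl | rfl <;> contradiction

theorem isChain_deleteEdges_or_split (hnd : l.Nodup) (hl : l.IsChain G.Adj) (x y : V) :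
    l.IsChain (G.deleteEdges {s(x, y)}).Adj ∨
      ∃ p q, l = p ++ q ∧ p.IsChain (G.deleteEdges {s(x, y)}).Adj ∧
        q.IsChain (G.deleteEdges {s(x, y)}).Adj ∧
        (p.getLast? = some x ∧ q.head? = some y ∨
          p.getLast? = some y ∧ q.head? = some x) := by
  induction l with
  | nil => exact Or.inl List.isChain_nil
  | cons u t ih =>
    rcases t with _ | ⟨w, t⟩
    · exact Or.inl (List.isChain_singleton u)
    by_cases he : s(u, w) = s(x, y)
    · have hu : u ∈ s(x, y) := he ▸ Sym2.mem_mk_left u w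
      refine Or.inr ⟨[u], w :: t, rfl, List.isChain_singleton u,
        isChain_deleteEdges_of_not_mem hu (List.nodup_cons.mp hnd).1 hl.tail, ?_⟩
      rcases Sym2.eq_iff.mp he with ⟨rfl, rfl⟩ | ⟨rfl, rfl⟩ <;> simp
    have huw : (G.deleteEdges {s(x, y)}).Adj u w := (deleteEdges_adj ..).mpr ⟨hl.rel, he⟩
    rcases ih hnd.of_cons hl.tail with ht | ⟨p, q, hpq, hp, hq, hends⟩
    · exact Or.inl (List.isChain_cons_cons.mpr ⟨huw, ht⟩)
    rcases p with _ | ⟨z, p⟩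
    · simp at hends
    obtain ⟨rfl, rfl⟩ := List.cons_eq_cons.mp hpq
    exact Or.inr ⟨u :: w :: p, q, rfl, List.isChain_cons_cons.mpr ⟨huw, hp⟩, hq,
      by simpa using hends⟩

namespace IsCutAt

theorem symm (h : IsCutAt L L' x y) : IsCutAt L L' y x := by
  obtain ⟨p, q, rest, hL, rfl, hends⟩ := h
  exact ⟨p, q, rest, hL, rfl, hends.symm⟩

theorem length_eq (h : IsCutAt L L' x y) : L'.length = L.length + 1 := by
  obtain ⟨p, q, rest, hL, rfl, -⟩ := h
  simp [hL.length_eq]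

theorem flatten_perm (h : IsCutAt L L' x y) : L'.flatten.Perm L.flatten := by
  obtain ⟨p, q, rest, hL, rfl, -⟩ := h
  simpa using hL.flatten.symm

theorem isPathEnd_left (h : IsCutAt L L' x y) : IsPathEnd L' x := by
  obtain ⟨p, q, rest, -, rfl, ⟨hp, -⟩ | ⟨-, hq⟩⟩ := h
  · exact ⟨p, by simp, Or.inr hp⟩
  · exact ⟨q, by simp, Or.inl hq⟩

theorem isPathEnd_of_isPathEnd (h : IsCutAt L L' x y) (hz : IsPathEnd L z) : IsPathEnd L' z := by
  obtain ⟨p, q, rest, hL, rfl, hends⟩ := h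
  have hp : p ≠ [] := by rintro rfl; simp at hends
  have hq : q ≠ [] := by rintro rfl; simp at hends
  obtain ⟨l, hl, hlz⟩ := hz
  rcases List.mem_cons.mp (hL.mem_iff.mp hl) with rfl | hl
  · rcases hlz with hz | hz
    · exact ⟨p, by simp, Or.inl (List.head?_append_of_ne_nil p hp ▸ hz)⟩
    · exact ⟨q, by simp, Or.inr (List.getLast?_append_of_ne_nil p hq ▸ hz)⟩
  · exact ⟨l, by simp [hl], hlz⟩

theorem samePath (h : IsCutAt L L' x y) : SamePath L x y := by
  obtain ⟨p, q, rest, hL, rfl, hends⟩ := h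
  refine ⟨p ++ q, hL.mem_iff.mpr (by simp), ?_⟩
  rcases hends with ⟨hx, hy⟩ | ⟨hy, hx⟩
  · exact ⟨List.mem_append_left q (List.mem_of_getLast? hx),
      List.mem_append_right p (List.mem_of_mem_head? hy)⟩
  · exact ⟨List.mem_append_right p (List.mem_of_mem_head? hx),
      List.mem_append_left q (List.mem_of_getLast? hy)⟩

theorem samePath_of_samePath (h : IsCutAt L L' x y) (hst : SamePath L' s t) :
    SamePath L s t := by
  obtain ⟨p, q, rest, hL, rfl, -⟩ := h
  obtain ⟨m, hm, hs, ht⟩ := hst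
  rcases List.mem_cons.mp hm with rfl | hm
  · exact ⟨m ++ q, hL.mem_iff.mpr (by simp), by simp [hs, ht]⟩
  rcases List.mem_cons.mp hm with rfl | hm
  · exact ⟨p ++ m, hL.mem_iff.mpr (by simp), by simp [hs, ht]⟩
  · exact ⟨m, hL.mem_iff.mpr (by simp [hm]), hs, ht⟩

theorem not_samePath (h : IsCutAt L L' x y) (hnd : L.flatten.Nodup) : ¬SamePath L' x y := by
  have hnd' := h.flatten_perm.nodup_iff.mpr hnd
  obtain ⟨p, q, rest, -, rfl, hends⟩ := h
  have hsep : ∀ u w, u ∈ p → w ∈ q → ¬SamePath (p :: q :: rest) u w := by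
    rintro u w hu hw ⟨m, hm, hum, hwm⟩
    obtain rfl := List.eq_of_mem_of_mem_of_nodup_flatten hnd' (by simp) hm hu hum
    simp only [List.flatten_cons, List.nodup_append] at hnd'
    exact hnd'.2.2 w hwm w (List.mem_append_left _ hw) rfl
  rcases hends with ⟨hx, hy⟩ | ⟨hy, hx⟩
  · exact hsep x y (List.mem_of_getLast? hx) (List.mem_of_mem_head? hy)
  · exact fun hxy => hsep y x (List.mem_of_getLast? hy) (List.mem_of_mem_head? hx) hxy.symm

theorem not_samePath_or_not_samePath {L₁ L₂ : List (List V)} {a b c d : V}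
    (h₁ : IsCutAt L L₁ a b) (h₂ : IsCutAt L₁ L₂ c d) (hnd : L.flatten.Nodup) :
    ¬SamePath L₂ a c ∨ ¬SamePath L₂ b d := by
  have hnd₁ := h₁.flatten_perm.nodup_iff.mpr hnd
  refine not_and_or.mp fun ⟨hac, hbd⟩ => h₁.not_samePath hnd ?_
  exact ((h₂.samePath_of_samePath hac).trans hnd₁ h₂.samePath).trans hnd₁
    (h₂.samePath_of_samePath hbd).symm

end IsCutAt

namespace IsPathCover

theorem mono (hL : G.IsPathCover L) (h : G ≤ H) : H.IsPathCover L :=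
  ⟨fun l hl => ⟨(hL.1 l hl).1, (hL.1 l hl).2.imp fun _ _ hxy => h hxy⟩, hL.2⟩

theorem of_flatten_perm (hL : G.IsPathCover L) (hp : L'.flatten.Perm L.flatten)
    (h : ∀ l ∈ L', l ≠ [] ∧ l.IsChain H.Adj) : H.IsPathCover L' :=
  ⟨h, hp.nodup_iff.mpr hL.2.1, fun v => hp.mem_iff.mpr (hL.2.2 v)⟩

theorem deleteEdges_or_exists_isCutAt (hL : G.IsPathCover L) (x y : V) :
    (G.deleteEdges {s(x, y)}).IsPathCover L ∨
      ∃ L', (G.deleteEdges {s(x, y)}).IsPathCover L' ∧ IsCutAt L L' x y := by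
  by_cases hall : ∀ l ∈ L, l.IsChain (G.deleteEdges {s(x, y)}).Adj
  · exact Or.inl ⟨fun l hl => ⟨(hL.1 l hl).1, hall l hl⟩, hL.2⟩
  push Not at hall
  obtain ⟨l, hl, hnot⟩ := hall
  obtain ⟨rest, hperm⟩ : ∃ rest, L.Perm (l :: rest) := by
    classical
    exact ⟨_, List.perm_cons_erase hl⟩
  rcases isChain_deleteEdges_or_split ((List.nodup_flatten.mp hL.2.1).1 l hl) (hL.1 l hl).2 x y
    with hc | ⟨p, q, rfl, hp, hq, hends⟩
  · exact absurd hc hnot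
  have hcut : IsCutAt L (p :: q :: rest) x y := ⟨p, q, rest, hperm, rfl, hends⟩
  refine Or.inr ⟨_, hL.of_flatten_perm hcut.flatten_perm ?_, hcut⟩
  have hx : x ∈ p ++ q := by
    rcases hends with ⟨h, -⟩ | ⟨-, h⟩
    · exact List.mem_append_left q (List.mem_of_getLast? h)
    · exact List.mem_append_right p (List.mem_of_mem_head? h)
  have hnd := hperm.flatten.nodup_iff.mp hL.2.1
  simp only [List.flatten_cons, List.nodup_append] at hnd
  simp only [List.mem_cons]
  rintro m (rfl | rfl | hm)
  · exact ⟨by rintro rfl; simp at hends, hp⟩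
  · exact ⟨by rintro rfl; simp at hends, hq⟩
  · have hmL : m ∈ L := hperm.mem_iff.mpr (List.mem_cons_of_mem _ hm)
    refine ⟨(hL.1 m hmL).1,
      isChain_deleteEdges_of_not_mem (Sym2.mem_mk_left x y) ?_ (hL.1 m hmL).2⟩
    exact fun hxm => hnd.2.2 x hx x (List.mem_flatten.mpr ⟨m, hm, hxm⟩) rfl

theorem merge (hL : G.IsPathCover L) (hx : IsPathEnd L x) (hy : IsPathEnd L y)
    (hxy : ¬SamePath L x y) (hadj : G.Adj x y) :
    ∃ L', G.IsPathCover L' ∧ L'.length + 1 = L.length := by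
  classical
  obtain ⟨u, hu, hux⟩ := hx
  obtain ⟨w, hw, hwy⟩ := hy
  have hwu : w ≠ u := by
    rintro rfl
    exact hxy ⟨w, hu, hux.elim List.mem_of_mem_head? List.mem_of_getLast?,
      hwy.elim List.mem_of_mem_head? List.mem_of_getLast?⟩
  obtain ⟨rest, hperm⟩ : ∃ rest, L.Perm (u :: w :: rest) :=
    ⟨_, (List.perm_cons_erase hu).trans
      ((List.perm_cons_erase ((List.mem_erase_of_ne hwu).mpr hw)).cons u)⟩
  obtain ⟨u', hu'p, hu'c, hu'x⟩ := exists_perm_isChain_getLast? (hL.1 u hu).2 hux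
  obtain ⟨w', hw'p, hw'c, hw'y⟩ := exists_perm_isChain_getLast? (hL.1 w hw).2 hwy
  refine ⟨(u' ++ w'.reverse) :: rest, hL.of_flatten_perm ?_ ?_, by simp [hperm.length_eq]⟩
  · refine List.Perm.trans ?_ hperm.flatten.symm
    simpa using hu'p.append ((w'.reverse_perm.trans hw'p).append (List.Perm.refl rest.flatten))
  · simp only [List.mem_cons]
    rintro m (rfl | hm)
    · refine ⟨List.append_ne_nil_of_left_ne_nil (by rintro rfl; simp at hu'x) _,
        hu'c.append (isChain_adj_reverse hw'c) fun a ha b hb => ?_⟩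
      rw [hu'x, Option.mem_some_iff] at ha
      rw [List.head?_reverse, hw'y, Option.mem_some_iff] at hb
      exact ha ▸ hb ▸ hadj
    · exact hL.1 m (hperm.mem_iff.mpr (by simp [hm]))

theorem exists_walks (hL : G.IsPathCover L) :
    ∃ P : Fin L.length → Σ u v : V, G.Walk u v,
      (∀ i, (P i).2.2.IsPath) ∧
      (∀ i j, i ≠ j → ∀ v : V, v ∈ (P i).2.2.support → v ∉ (P j).2.2.support) ∧
      (∀ v : V, ∃ i, v ∈ (P i).2.2.support) := by
  have hne (i : Fin L.length) : L[i] ≠ [] := (hL.1 _ (List.getElem_mem i.2)).1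
  have hchain (i : Fin L.length) : L[i].IsChain G.Adj := (hL.1 _ (List.getElem_mem i.2)).2
  have hsupp (i : Fin L.length) : (Walk.ofSupport L[i] (hne i) (hchain i)).support = L[i] :=
    Walk.support_ofSupport _ _
  obtain ⟨hnd, hdisj⟩ := List.nodup_flatten.mp hL.2.1
  refine ⟨fun i => ⟨_, _, Walk.ofSupport L[i] (hne i) (hchain i)⟩, fun i => ?_,
    fun i j hij v => ?_, fun v => ?_⟩
  · rw [Walk.isPath_def, hsupp]
    exact hnd _ (List.getElem_mem i.2)
  · simp only [hsupp]
    rcases Fin.lt_or_lt_of_ne hij with h | h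
    · exact fun hi hj => List.pairwise_iff_getElem.mp hdisj i j i.2 j.2 h hi hj
    · exact fun hi hj => List.pairwise_iff_getElem.mp hdisj j i j.2 i.2 h hj hi
  · obtain ⟨l, hl, hv⟩ := List.mem_flatten.mp (hL.2.2 v)
    obtain ⟨i, hi, rfl⟩ := List.getElem_of_mem hl
    exact ⟨⟨i, hi⟩, by simpa [hsupp] using hv⟩

theorem pathCoverNum_le [Fintype V] (hL : G.IsPathCover L) : pathCoverNum G ≤ L.length :=
  Nat.sInf_le hL.exists_walks

end IsPathCover

theorem isPathCover_singletons [Fintype V] (G : SimpleGraph V) :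
    G.IsPathCover ((Finset.univ : Finset V).toList.map fun v => [v]) := by
  refine ⟨by simp, ?_, by simp [← List.flatMap_def]⟩
  simpa [← List.flatMap_def] using Finset.nodup_toList _

theorem exists_isPathCover_length_eq_pathCoverNum [Fintype V] (G : SimpleGraph V) :
    ∃ L, G.IsPathCover L ∧ L.length = pathCoverNum G := by
  obtain ⟨P, hpath, hdisj, hcov⟩ : pathCoverNum G ∈ _ :=
    Nat.sInf_mem ⟨_, (isPathCover_singletons G).exists_walks⟩
  refine ⟨List.ofFn fun i => (P i).2.2.support, ⟨?_, ?_, fun v => ?_⟩,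
    by simp [pathCoverNum]⟩
  · simp only [List.mem_ofFn]
    rintro l ⟨i, rfl⟩
    exact ⟨Walk.support_ne_nil _, Walk.isChain_adj_support _⟩
  · refine List.nodup_flatten.mpr ⟨?_, List.pairwise_ofFn.mpr fun i j hij v hi hj => ?_⟩
    · simp only [List.mem_ofFn]
      rintro l ⟨i, rfl⟩
      exact (hpath i).support_nodup
    · exact hdisj i j hij.ne v hi hj
  · obtain ⟨i, hi⟩ := hcov v
    exact List.mem_flatten.mpr ⟨_, List.mem_ofFn.mpr ⟨i, rfl⟩, hi⟩

end SimpleGraph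

section TwoSwitch

variable {V : Type*} {G : SimpleGraph V} {a b c d : V}

theorem twoSwitch_adj {x y : V} : (twoSwitch G a b c d).Adj x y ↔
    ((G.Adj x y ∧ s(x, y) ≠ s(a, b) ∧ s(x, y) ≠ s(c, d)) ∨
      s(x, y) = s(a, c) ∨ s(x, y) = s(b, d)) ∧ x ≠ y := by
  simp only [twoSwitch, fromEdgeSet_adj, Set.mem_union, Set.mem_sdiff, mem_edgeSet,
    Set.mem_insert_iff, Set.mem_singleton_iff, not_or]

theorem deleteEdges_le_twoSwitch :
    (G.deleteEdges {s(a, b)}).deleteEdges {s(c, d)} ≤ twoSwitch G a b c d := by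
  intro x y h
  simp only [deleteEdges_adj, Set.mem_singleton_iff] at h
  exact twoSwitch_adj.mpr ⟨Or.inl ⟨h.1.1, h.1.2, h.2⟩, h.1.1.ne⟩

theorem twoSwitch_adj_left (h : a ≠ c) : (twoSwitch G a b c d).Adj a c :=
  twoSwitch_adj.mpr ⟨Or.inr (Or.inl rfl), h⟩

theorem twoSwitch_adj_right (h : b ≠ d) : (twoSwitch G a b c d).Adj b d :=
  twoSwitch_adj.mpr ⟨Or.inr (Or.inr rfl), h⟩

theorem Switchable.switchable_twoSwitch (h : Switchable G a b c d) :
    Switchable (twoSwitch G a b c d) a c b d := by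
  obtain ⟨hab, hac, had, hbc, hbd, hcd, -, -, -, -⟩ := h
  refine ⟨hac, hab, had, hbc.symm, hcd, hbd, twoSwitch_adj_left hac, twoSwitch_adj_right hbd,
    ?_, ?_⟩
  all_goals
    simp only [twoSwitch_adj, Sym2.eq_iff, not_and]
    grind

theorem Switchable.twoSwitch_twoSwitch (h : Switchable G a b c d) :
    twoSwitch (twoSwitch G a b c d) a c b d = G := by
  obtain ⟨hab, hac, had, hbc, hbd, hcd, hGab, hGcd, hGac, hGbd⟩ := h
  have hGba := hGab.symm
  have hGdc := hGcd.symm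
  have hGca : ¬G.Adj c a := fun h => hGac h.symm
  have hGdb : ¬G.Adj d b := fun h => hGbd h.symm
  ext x y
  by_cases hxy : s(x, y) = s(a, b) ∨ s(x, y) = s(c, d) ∨ s(x, y) = s(a, c) ∨ s(x, y) = s(b, d)
  · rcases hxy with h | h | h | h <;>
      rcases Sym2.eq_iff.mp h with ⟨rfl, rfl⟩ | ⟨rfl, rfl⟩ <;>
      simp [twoSwitch_adj, *, hab.symm, hac.symm, had.symm, hbc.symm, hbd.symm, hcd.symm]
  · simp only [not_or] at hxy
    simp +contextual [twoSwitch_adj, hxy, G.ne_of_adj]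

theorem pathCoverNum_twoSwitch_le [Fintype V] (hac : a ≠ c) (hbd : b ≠ d) :
    pathCoverNum (twoSwitch G a b c d) ≤ pathCoverNum G + 1 := by
  obtain ⟨L, hL, hlen⟩ := exists_isPathCover_length_eq_pathCoverNum G
  rw [← hlen]
  have hle : (G.deleteEdges {s(a, b)}).deleteEdges {s(c, d)} ≤ twoSwitch G a b c d :=
    deleteEdges_le_twoSwitch
  rcases hL.deleteEdges_or_exists_isCutAt a b with hL₁ | ⟨L₁, hL₁, hcut₁⟩
  · rcases hL₁.deleteEdges_or_exists_isCutAt c d with hL₂ | ⟨L₂, hL₂, hcut₂⟩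
    · exact (hL₂.mono hle).pathCoverNum_le.trans (Nat.le_succ _)
    · exact (hL₂.mono hle).pathCoverNum_le.trans hcut₂.length_eq.le
  rcases hL₁.deleteEdges_or_exists_isCutAt c d with hL₂ | ⟨L₂, hL₂, hcut₂⟩
  · exact (hL₂.mono hle).pathCoverNum_le.trans hcut₁.length_eq.le
  obtain ⟨L₃, hL₃, hlen₃⟩ :
      ∃ L₃, (twoSwitch G a b c d).IsPathCover L₃ ∧ L₃.length + 1 = L₂.length := by
    rcases hcut₁.not_samePath_or_not_samePath hcut₂ hL.2.1 with h | h
    · exact (hL₂.mono hle).merge (hcut₂.isPathEnd_of_isPathEnd hcut₁.isPathEnd_left)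
        hcut₂.isPathEnd_left h (twoSwitch_adj_left hac)
    · exact (hL₂.mono hle).merge (hcut₂.isPathEnd_of_isPathEnd hcut₁.symm.isPathEnd_left)
        hcut₂.symm.isPathEnd_left h (twoSwitch_adj_right hbd)
  have := hcut₁.length_eq
  have := hcut₂.length_eq
  exact hL₃.pathCoverNum_le.trans (by omega)

end TwoSwitch

theorem ObtainedByTwoSwitch.symm {V : Type*} {G G' : SimpleGraph V}
    (h : ObtainedByTwoSwitch G G') : ObtainedByTwoSwitch G' G := by
  obtain ⟨a, b, c, d, hsw, rfl⟩ := h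
  exact ⟨a, c, b, d, hsw.switchable_twoSwitch, hsw.twoSwitch_twoSwitch.symm⟩

theorem ObtainedByTwoSwitch.pathCoverNum_le {V : Type*} [Fintype V] {G G' : SimpleGraph V}
    (h : ObtainedByTwoSwitch G G') : pathCoverNum G' ≤ pathCoverNum G + 1 := by
  obtain ⟨a, b, c, d, ⟨-, hac, -, -, hbd, -⟩, rfl⟩ := h
  exact pathCoverNum_twoSwitch_le hac hbd

/-- the path-covering number is stable under 2-switch. -/
theorem stmt_17 {V : Type*} [Fintype V] (G G' : SimpleGraph V)
    (h : ObtainedByTwoSwitch G G') :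
    |(pathCoverNum G' : ℤ) - (pathCoverNum G : ℤ)| ≤ 1 := by
  have h₁ := h.pathCoverNum_le
  have h₂ := h.symm.pathCoverNum_le
  rw [abs_le]
  constructor <;> omega
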